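/- arXiv:1904.10292 — 3 statements merged into one kernel-verified Lean document; each statement's English description precedes it below -/
import Mathlib

section
/- Let 0 ≤ d ≤ n and suppose F_1, …, F_s ⊆ 2^[n] are d-cross-dependent. Then Σ_{i=1}^{s} ‖F_i‖_n ≤ (n+1)s − (d+1). -/
open Finset

/-- The binomial norm of a family `F` of subsets of `[n]`:
`‖F‖ₙ = ∑_{A ∈ F} 1 / C(n, |A|)`. -/
noncomputable def binNorm (n : ℕ) (F : Finset (Finset ℕ)) : ℝ :=
  ∑ A ∈ F, 1 / (n.choose A.card : ℝ)

/-- Families `F 1, …, F s` are `d`-cross-dependent if one cannot pick pairwise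
disjoint `f i ∈ F i` whose union has at most `d` elements. -/
def DCrossDep (d : ℕ) {s : ℕ} (F : Fin s → Finset (Finset ℕ)) : Prop :=
  ¬ ∃ f : Fin s → Finset ℕ, (∀ i, f i ∈ F i) ∧
      (Pairwise fun i j => Disjoint (f i) (f j)) ∧
      (Finset.univ.biUnion f).card ≤ d

lemma binNorm_mono {n : ℕ} {F G : Finset (Finset ℕ)} (h : F ⊆ G) :
    binNorm n F ≤ binNorm n G :=
  Finset.sum_le_sum_of_subset_of_nonneg h (fun _ _ _ => by positivity)

lemma binNorm_powerset (n : ℕ) : binNorm n (range n).powerset = (n : ℝ) + 1 := by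
  unfold binNorm
  rw [Finset.sum_powerset_apply_card (fun k => 1 / ((n.choose k : ℝ))), card_range]
  rw [Finset.sum_congr rfl (fun m hm => ?_), Finset.sum_const, card_range, nsmul_eq_mul, mul_one]
  · push_cast; ring
  · have h : 0 < n.choose m := Nat.choose_pos (Nat.lt_succ_iff.mp (mem_range.mp hm))
    rw [nsmul_eq_mul]
    field_simp

lemma binNorm_le {n : ℕ} {F : Finset (Finset ℕ)} (h : ∀ A ∈ F, A ⊆ range n) :
    binNorm n F ≤ (n : ℝ) + 1 := by
  calc binNorm n F ≤ binNorm n (range n).powerset :=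
        binNorm_mono (fun A hA => mem_powerset.2 (h A hA))
    _ = (n : ℝ) + 1 := binNorm_powerset n

lemma binNorm_le_of_empty_notMem {n : ℕ} {F : Finset (Finset ℕ)}
    (h : ∀ A ∈ F, A ⊆ range n) (he : ∅ ∉ F) : binNorm n F ≤ (n : ℝ) := by
  have hFsub : F ⊆ ((range n).powerset).erase ∅ := by
    intro A hA
    exact mem_erase.2 ⟨fun hAe => he (hAe ▸ hA), mem_powerset.2 (h A hA)⟩
  have h1 : binNorm n (((range n).powerset).erase ∅) + 1 = (n : ℝ) + 1 := by
    have := Finset.sum_erase_add ((range n).powerset)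
      (fun A => 1 / ((n.choose A.card : ℝ))) (mem_powerset.2 (empty_subset _))
    unfold binNorm
    rw [← binNorm_powerset n]
    unfold binNorm
    simpa using this
  calc binNorm n F ≤ binNorm n (((range n).powerset).erase ∅) := binNorm_mono hFsub
    _ = (n : ℝ) := by linarith

lemma exists_empty_notMem {d s : ℕ} {F : Fin s → Finset (Finset ℕ)}
    (h : DCrossDep d F) : ∃ j, ∅ ∉ F j := by
  by_contra hc
  push_neg at hc
  exact h ⟨fun _ => ∅, fun i => hc i, fun i j _ => disjoint_bot_left,
    le_trans (le_trans Finset.card_biUnion_le (by simp)) (Nat.zero_le d)⟩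

lemma nat_id1 (m k : ℕ) : (m + 1) * m.choose k = (m + 1).choose k * (m + 1 - k) := by
  rw [← Nat.choose_succ_right_eq]
  exact Nat.add_one_mul_choose_eq m k

lemma real_id1 {m k : ℕ} (hk : k ≤ m) :
    ((m : ℝ) + 1) * (1 / ((m + 1).choose k : ℝ)) =
      ((m : ℝ) + 1 - k) * (1 / (m.choose k : ℝ)) := by
  have h1 : 0 < ((m + 1).choose k : ℝ) := by
    exact_mod_cast Nat.choose_pos (hk.trans (Nat.le_succ m))
  have h2 : 0 < (m.choose k : ℝ) := by exact_mod_cast Nat.choose_pos hk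
  have h3 := congrArg (Nat.cast : ℕ → ℝ) (nat_id1 m k)
  push_cast [Nat.cast_sub (hk.trans (Nat.le_succ m))] at h3
  field_simp
  nlinarith [h3]

lemma real_id2 {m l : ℕ} (hl : l ≤ m) :
    ((l : ℝ) + 1) * (1 / (m.choose l : ℝ)) =
      ((m : ℝ) + 1) * (1 / ((m + 1).choose (l + 1) : ℝ)) := by
  have h1 : 0 < (m.choose l : ℝ) := by exact_mod_cast Nat.choose_pos hl
  have h2 : 0 < ((m + 1).choose (l + 1) : ℝ) := by
    exact_mod_cast Nat.choose_pos (Nat.succ_le_succ hl)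
  have h3 := congrArg (Nat.cast : ℕ → ℝ) (Nat.add_one_mul_choose_eq m l)
  push_cast at h3
  field_simp
  nlinarith [h3]

lemma swap_mem_range {i m x : ℕ} (him : i ≤ m) (hx : x ≤ m) (hxi : x ≠ i) :
    Equiv.swap i m x < m := by
  rcases eq_or_ne x m with rfl | hxm
  · rw [Equiv.swap_apply_right]
    exact lt_of_le_of_ne him (Ne.symm hxi)
  · rw [Equiv.swap_apply_of_ne_of_ne hxi hxm]
    exact lt_of_le_of_ne hx hxm

lemma swap_image_image {i m : ℕ} (S : Finset ℕ) :
    (S.image (Equiv.swap i m)).image (Equiv.swap i m) = S := by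
  rw [Finset.image_image]
  have : (Equiv.swap i m) ∘ (Equiv.swap i m) = id := by
    funext x; simp [Equiv.swap_apply_self]
  rw [this, Finset.image_id]

lemma notMem_swap_image {i m : ℕ} {S : Finset ℕ} (hS : ∀ x ∈ S, x < m) :
    i ∉ S.image (Equiv.swap i m) := by
  intro hmem
  obtain ⟨x, hx, hswap⟩ := Finset.mem_image.1 hmem
  have : x = m := by
    have := congrArg (Equiv.swap i m) hswap
    rwa [Equiv.swap_apply_self, Equiv.swap_apply_left] at this
  exact absurd (hS x hx) (by omega)

/-- Sum identity for the "link" families: summing over the removed element. -/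
lemma sumB {m : ℕ} {Fj : Finset (Finset ℕ)} (hsub : ∀ A ∈ Fj, A ⊆ range (m + 1))
    (hne : ∅ ∉ Fj) :
    ((m : ℝ) + 1) * binNorm (m + 1) Fj =
      ∑ i ∈ range (m + 1), ∑ A ∈ Fj.filter (fun A => i ∈ A),
        1 / (m.choose (A.card - 1) : ℝ) := by
  have swap : ∑ i ∈ range (m + 1), ∑ A ∈ Fj.filter (fun A => i ∈ A),
      (1 : ℝ) / (m.choose (A.card - 1) : ℝ) =
      ∑ A ∈ Fj, (A.card : ℝ) * (1 / (m.choose (A.card - 1) : ℝ)) := by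
    rw [Finset.sum_congr rfl (fun i _ => Finset.sum_filter _ _), Finset.sum_comm]
    refine Finset.sum_congr rfl (fun A hA => ?_)
    rw [← Finset.sum_filter, Finset.filter_mem_eq_inter,
      Finset.inter_eq_right.mpr (hsub A hA), Finset.sum_const, nsmul_eq_mul]
  rw [swap, binNorm, Finset.mul_sum]
  refine Finset.sum_congr rfl (fun A hA => ?_)
  have hAne : A ≠ ∅ := fun h => hne (h ▸ hA)
  obtain ⟨l, hl⟩ : ∃ l, A.card = l + 1 := by
    have := Finset.card_pos.2 (Finset.nonempty_of_ne_empty hAne)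
    exact ⟨A.card - 1, by omega⟩
  have hlm : l ≤ m := by
    have := Finset.card_le_card (hsub A hA)
    rw [card_range] at this
    omega
  rw [hl]
  simp only [Nat.add_sub_cancel]
  rw [← real_id2 hlm]
  push_cast
  ring

/-- Lower bound for the "deletion" families: summing over the removed element. -/
lemma sumA {m : ℕ} {Fj : Finset (Finset ℕ)} (hsub : ∀ A ∈ Fj, A ⊆ range (m + 1)) :
    ((m : ℝ) + 1) * binNorm (m + 1) Fj - ((m : ℝ) + 1) ≤
      ∑ i ∈ range (m + 1), ∑ A ∈ Fj.filter (fun A => i ∉ A),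
        1 / (m.choose A.card : ℝ) := by
  have swap : ∑ i ∈ range (m + 1), ∑ A ∈ Fj.filter (fun A => i ∉ A),
      (1 : ℝ) / (m.choose A.card : ℝ) =
      ∑ A ∈ Fj, ((m + 1 - A.card : ℕ) : ℝ) * (1 / (m.choose A.card : ℝ)) := by
    rw [Finset.sum_congr rfl (fun i _ => Finset.sum_filter _ _), Finset.sum_comm]
    refine Finset.sum_congr rfl (fun A hA => ?_)
    rw [← Finset.sum_filter, ← Finset.sdiff_eq_filter, Finset.sum_const, nsmul_eq_mul,
      Finset.card_sdiff_of_subset (hsub A hA), card_range]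
  rw [swap]
  have hstep : ∀ A ∈ Fj,
      ((m : ℝ) + 1) * (1 / ((m + 1).choose A.card : ℝ))
        - (if A.card = m + 1 then ((m : ℝ) + 1) else 0)
      ≤ ((m + 1 - A.card : ℕ) : ℝ) * (1 / (m.choose A.card : ℝ)) := by
    intro A hA
    have hcard : A.card ≤ m + 1 := by
      have := Finset.card_le_card (hsub A hA)
      rwa [card_range] at this
    rcases Nat.lt_or_ge A.card (m + 1) with hlt | hge
    · have hk : A.card ≤ m := by omega
      rw [if_neg (by omega), sub_zero, real_id1 hk,
        Nat.cast_sub (by omega : A.card ≤ m + 1)]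
      apply le_of_eq
      push_cast
      ring
    · have heq : A.card = m + 1 := le_antisymm hcard hge
      rw [if_pos heq, heq, Nat.choose_self]
      simp
  have hsum := Finset.sum_le_sum hstep
  rw [Finset.sum_sub_distrib] at hsum
  have hbig : ∑ A ∈ Fj, ((m : ℝ) + 1) * (1 / ((m + 1).choose A.card : ℝ))
      = ((m : ℝ) + 1) * binNorm (m + 1) Fj := by
    rw [binNorm, Finset.mul_sum]
  have hite : ∑ A ∈ Fj, (if A.card = m + 1 then ((m : ℝ) + 1) else 0) ≤ (m : ℝ) + 1 := by
    rw [← Finset.sum_filter, Finset.sum_const, nsmul_eq_mul]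
    have hss : Fj.filter (fun A => A.card = m + 1) ⊆ {range (m + 1)} := by
      intro A hAf
      rw [Finset.mem_filter] at hAf
      rw [Finset.mem_singleton]
      exact Finset.eq_of_subset_of_card_le (hsub A hAf.1) (by rw [card_range, hAf.2])
    have hc1 : ((Fj.filter (fun A => A.card = m + 1)).card : ℝ) ≤ 1 := by
      have := Finset.card_le_card hss
      rw [Finset.card_singleton] at this
      exact_mod_cast this
    nlinarith [Nat.cast_nonneg (α := ℝ) m]
  rw [hbig] at hsum
  linarith

lemma normA {m i : ℕ} {Fj : Finset (Finset ℕ)} :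
    binNorm m ((Fj.filter (fun A => i ∉ A)).image (fun A => A.image (Equiv.swap i m))) =
      ∑ A ∈ Fj.filter (fun A => i ∉ A), 1 / (m.choose A.card : ℝ) := by
  rw [binNorm, Finset.sum_image ?hinj]
  · exact Finset.sum_congr rfl fun A hA => by
      rw [Finset.card_image_of_injective _ (Equiv.injective _)]
  case hinj =>
    intro A _ A' _ h
    have := congrArg (Finset.image (Equiv.swap i m)) h
    rwa [swap_image_image, swap_image_image] at this

lemma normB {m i : ℕ} {Fj : Finset (Finset ℕ)} :
    binNorm m ((Fj.filter (fun A => i ∈ A)).image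
        (fun A => (A.erase i).image (Equiv.swap i m))) =
      ∑ A ∈ Fj.filter (fun A => i ∈ A), 1 / (m.choose (A.card - 1) : ℝ) := by
  rw [binNorm, Finset.sum_image ?hinj]
  · exact Finset.sum_congr rfl fun A hA => by
      rw [Finset.card_image_of_injective _ (Equiv.injective _),
        Finset.card_erase_of_mem (Finset.mem_filter.1 hA).2]
  case hinj =>
    intro A hA A' hA' h
    have h2 := congrArg (Finset.image (Equiv.swap i m)) h
    rw [swap_image_image, swap_image_image] at h2
    have h3 := congrArg (insert i) h2
    rwa [Finset.insert_erase (Finset.mem_filter.1 hA).2,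
      Finset.insert_erase (Finset.mem_filter.1 hA').2] at h3

def GFam (m : ℕ) {s : ℕ} (F : Fin s → Finset (Finset ℕ)) (j0 : Fin s) (i : ℕ) :
    Fin s → Finset (Finset ℕ) := fun j =>
  if j = j0
    then ((F j0).filter (fun A => i ∈ A)).image (fun A => (A.erase i).image (Equiv.swap i m))
    else ((F j).filter (fun A => i ∉ A)).image (fun A => A.image (Equiv.swap i m))

lemma GFam_sub {m s : ℕ} {F : Fin s → Finset (Finset ℕ)} {j0 : Fin s} {i : ℕ}
    (hsub : ∀ j, ∀ A ∈ F j, A ⊆ range (m + 1)) (him : i ≤ m) :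
    ∀ j, ∀ B ∈ GFam m F j0 i j, B ⊆ range m := by
  intro j B hB x hx
  unfold GFam at hB
  split_ifs at hB with hj
  · obtain ⟨A, hA, rfl⟩ := Finset.mem_image.1 hB
    rw [Finset.mem_filter] at hA
    obtain ⟨y, hy, rfl⟩ := Finset.mem_image.1 hx
    have hy' : y ∈ A := Finset.mem_of_mem_erase hy
    have hyi : y ≠ i := Finset.ne_of_mem_erase hy
    have hym : y ≤ m := by have := mem_range.1 (hsub j0 A hA.1 hy'); omega
    exact mem_range.2 (swap_mem_range him hym hyi)
  · obtain ⟨A, hA, rfl⟩ := Finset.mem_image.1 hB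
    rw [Finset.mem_filter] at hA
    obtain ⟨y, hy, rfl⟩ := Finset.mem_image.1 hx
    have hyi : y ≠ i := fun h => hA.2 (h ▸ hy)
    have hym : y ≤ m := by have := mem_range.1 (hsub j A hA.1 hy); omega
    exact mem_range.2 (swap_mem_range him hym hyi)

lemma GFam_cross {m d s : ℕ} {F : Fin s → Finset (Finset ℕ)} {j0 : Fin s} {i : ℕ}
    (hsub : ∀ j, ∀ A ∈ F j, A ⊆ range (m + 1)) (him : i ≤ m)
    (hcross : DCrossDep (d + 1) F) : DCrossDep d (GFam m F j0 i) := by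
  rintro ⟨f, hf, hdis, hcard⟩
  have hfs : ∀ j, ∀ x ∈ f j, x < m := by
    intro j x hx
    exact mem_range.1 (GFam_sub hsub him j (f j) (hf j) hx)
  apply hcross
  refine ⟨fun j => if j = j0 then insert i ((f j).image (Equiv.swap i m))
    else (f j).image (Equiv.swap i m), ?_, ?_, ?_⟩
  · intro j
    dsimp only
    by_cases hj : j = j0
    · subst hj
      rw [if_pos rfl]
      have hfj := hf j
      unfold GFam at hfj
      rw [if_pos rfl] at hfj
      obtain ⟨A, hA, hEq⟩ := Finset.mem_image.1 hfj
      rw [Finset.mem_filter] at hA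
      rw [← hEq, swap_image_image, Finset.insert_erase hA.2]
      exact hA.1
    · rw [if_neg hj]
      have hfj := hf j
      unfold GFam at hfj
      rw [if_neg hj] at hfj
      obtain ⟨A, hA, hEq⟩ := Finset.mem_image.1 hfj
      rw [Finset.mem_filter] at hA
      rw [← hEq, swap_image_image]
      exact hA.1
  · intro a b hab
    dsimp only
    have hdisj : Disjoint ((f a).image (Equiv.swap i m)) ((f b).image (Equiv.swap i m)) :=
      (Finset.disjoint_image (Equiv.injective _)).2 (hdis hab)
    by_cases ha : a = j0
    · have hb : b ≠ j0 := fun h => hab (ha.trans h.symm)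
      rw [if_pos ha, if_neg hb, Finset.disjoint_insert_left]
      exact ⟨notMem_swap_image (hfs b), hdisj⟩
    · rw [if_neg ha]
      by_cases hb : b = j0
      · rw [if_pos hb, Finset.disjoint_insert_right]
        exact ⟨notMem_swap_image (hfs a), hdisj⟩
      · rw [if_neg hb]; exact hdisj
  · have hsubU : (Finset.univ.biUnion fun j => if j = j0
        then insert i ((f j).image (Equiv.swap i m)) else (f j).image (Equiv.swap i m))
        ⊆ insert i ((Finset.univ.biUnion f).image (Equiv.swap i m)) := by
      intro x hx
      obtain ⟨j, _, hxj⟩ := Finset.mem_biUnion.1 hx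
      by_cases hj : j = j0
      · rw [if_pos hj] at hxj
        rcases Finset.mem_insert.1 hxj with rfl | hxj'
        · exact Finset.mem_insert_self _ _
        · exact Finset.mem_insert_of_mem (Finset.image_subset_image
            (Finset.subset_biUnion_of_mem f (Finset.mem_univ j)) hxj')
      · rw [if_neg hj] at hxj
        exact Finset.mem_insert_of_mem (Finset.image_subset_image
          (Finset.subset_biUnion_of_mem f (Finset.mem_univ j)) hxj)
    calc (Finset.univ.biUnion _).card
        ≤ (insert i ((Finset.univ.biUnion f).image (Equiv.swap i m))).card :=
          Finset.card_le_card hsubU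
      _ ≤ ((Finset.univ.biUnion f).image (Equiv.swap i m)).card + 1 :=
          Finset.card_insert_le _ _
      _ = (Finset.univ.biUnion f).card + 1 := by
          rw [Finset.card_image_of_injective _ (Equiv.injective _)]
      _ ≤ d + 1 := by omega

theorem main_aux : ∀ (d n s : ℕ), d ≤ n → ∀ F : Fin s → Finset (Finset ℕ),
    (∀ j, ∀ A ∈ F j, A ⊆ range n) → DCrossDep d F →
    ∑ j, binNorm n (F j) ≤ ((n : ℝ) + 1) * s - ((d : ℝ) + 1) := by
  intro d
  induction d with
  | zero =>
    intro n s _ F hsub hcross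
    obtain ⟨j0, hj0⟩ := exists_empty_notMem hcross
    have hb : ∀ j : Fin s, binNorm n (F j) ≤ ((n : ℝ) + 1) - (if j = j0 then 1 else 0) := by
      intro j
      by_cases hj : j = j0
      · subst hj
        simpa using binNorm_le_of_empty_notMem (hsub j) hj0
      · rw [if_neg hj, sub_zero]
        exact binNorm_le (hsub j)
    calc ∑ j, binNorm n (F j)
        ≤ ∑ j : Fin s, (((n : ℝ) + 1) - (if j = j0 then 1 else 0)) :=
          Finset.sum_le_sum fun j _ => hb j
      _ = ((n : ℝ) + 1) * s - 1 := by
          rw [Finset.sum_sub_distrib, Finset.sum_const,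
            Finset.sum_ite_eq' Finset.univ j0 (fun _ => (1 : ℝ))]
          simp [Finset.card_univ]
          ring
      _ ≤ ((n : ℝ) + 1) * s - ((0 : ℕ) + 1 : ℝ) := by norm_num
  | succ d ih =>
    intro n s hdn F hsub hcross
    obtain ⟨m, rfl⟩ : ∃ m, n = m + 1 := ⟨n - 1, by omega⟩
    obtain ⟨j0, hj0⟩ := exists_empty_notMem hcross
    have hs1 : 1 ≤ s := j0.pos
    have key : ∀ i ∈ range (m + 1), ∑ j, binNorm m (GFam m F j0 i j)
        ≤ ((m : ℝ) + 1) * s - ((d : ℝ) + 1) := by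
      intro i hi
      have him : i ≤ m := by have := mem_range.1 hi; omega
      exact ih m s (by omega) _ (GFam_sub hsub him) (GFam_cross hsub him hcross)
    have total : ∑ i ∈ range (m + 1), ∑ j, binNorm m (GFam m F j0 i j)
        ≤ ((m : ℝ) + 1) * (((m : ℝ) + 1) * s - ((d : ℝ) + 1)) := by
      calc ∑ i ∈ range (m + 1), ∑ j, binNorm m (GFam m F j0 i j)
          ≤ ∑ _i ∈ range (m + 1), (((m : ℝ) + 1) * s - ((d : ℝ) + 1)) :=
            Finset.sum_le_sum key
        _ = _ := by rw [Finset.sum_const, card_range, nsmul_eq_mul]; push_cast; ring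
    have hlow : ((m : ℝ) + 1) * (∑ j, binNorm (m + 1) (F j)) - ((m : ℝ) + 1) * ((s : ℝ) - 1)
        ≤ ∑ i ∈ range (m + 1), ∑ j, binNorm m (GFam m F j0 i j) := by
      rw [Finset.sum_comm]
      have e3 := Finset.sum_erase_add Finset.univ
        (fun j => ∑ i ∈ range (m + 1), binNorm m (GFam m F j0 i j)) (Finset.mem_univ j0)
      have hj0part : ((m : ℝ) + 1) * binNorm (m + 1) (F j0)
          ≤ ∑ i ∈ range (m + 1), binNorm m (GFam m F j0 i j0) := by
        have heq : ∀ i ∈ range (m + 1), binNorm m (GFam m F j0 i j0)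
            = ∑ A ∈ (F j0).filter (fun A => i ∈ A), 1 / (m.choose (A.card - 1) : ℝ) := by
          intro i _
          unfold GFam
          rw [if_pos rfl]
          exact normB
        rw [Finset.sum_congr rfl heq, ← sumB (hsub j0) hj0]
      have hrest : ∀ j ∈ Finset.univ.erase j0,
          ((m : ℝ) + 1) * binNorm (m + 1) (F j) - ((m : ℝ) + 1)
            ≤ ∑ i ∈ range (m + 1), binNorm m (GFam m F j0 i j) := by
        intro j hje
        have hj : j ≠ j0 := (Finset.mem_erase.1 hje).1
        have heq : ∀ i ∈ range (m + 1), binNorm m (GFam m F j0 i j)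
            = ∑ A ∈ (F j).filter (fun A => i ∉ A), 1 / (m.choose A.card : ℝ) := by
          intro i _
          unfold GFam
          rw [if_neg hj]
          exact normA
        rw [Finset.sum_congr rfl heq]
        exact sumA (hsub j)
      have hsum_rest := Finset.sum_le_sum hrest
      have hcard_erase : ((Finset.univ.erase j0).card : ℝ) = (s : ℝ) - 1 := by
        rw [Finset.card_erase_of_mem (Finset.mem_univ j0), Finset.card_univ, Fintype.card_fin]
        push_cast [Nat.cast_sub hs1]
        ring
      have e1 : ∑ j ∈ Finset.univ.erase j0, (((m : ℝ) + 1) * binNorm (m + 1) (F j) - ((m : ℝ) + 1))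
          = ((m : ℝ) + 1) * (∑ j ∈ Finset.univ.erase j0, binNorm (m + 1) (F j))
            - ((m : ℝ) + 1) * ((s : ℝ) - 1) := by
        rw [Finset.sum_sub_distrib, Finset.sum_const, ← Finset.mul_sum, nsmul_eq_mul,
          hcard_erase]
        ring
      have e2 : ∑ j ∈ Finset.univ.erase j0, binNorm (m + 1) (F j) + binNorm (m + 1) (F j0)
          = ∑ j, binNorm (m + 1) (F j) :=
        Finset.sum_erase_add _ _ (Finset.mem_univ j0)
      have e2' : ((m : ℝ) + 1) * (∑ j ∈ Finset.univ.erase j0, binNorm (m + 1) (F j))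
          + ((m : ℝ) + 1) * binNorm (m + 1) (F j0)
          = ((m : ℝ) + 1) * ∑ j, binNorm (m + 1) (F j) := by
        rw [← e2]; ring
      rw [e1] at hsum_rest
      linarith
    have final := le_trans hlow total
    have hm1 : (0 : ℝ) < (m : ℝ) + 1 := by positivity
    have h3 : ((m : ℝ) + 1) * (∑ j, binNorm (m + 1) (F j))
        ≤ ((m : ℝ) + 1) * ((((m : ℝ) + 1) + 1) * s - (((d : ℝ) + 1) + 1)) := by
      nlinarith [final]
    have h4 := le_of_mul_le_mul_left h3 hm1
    push_cast
    convert h4 using 2 <;> push_cast <;> ring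

theorem stmt_6 (n d s : ℕ) (hd : d ≤ n) (F : Fin s → Finset (Finset ℕ))
    (hsub : ∀ i, ∀ A ∈ F i, A ⊆ Finset.range n)
    (hcross : DCrossDep d F) :
    ∑ i, binNorm n (F i) ≤ ((n : ℝ) + 1) * (s : ℝ) - ((d : ℝ) + 1) := by
  exact main_aux d n s hd F hsub hcross
end

section
/- Let F ⊆ 2^[n] with ∅ ∈ F and [n] ∉ F. If ‖∂F‖_n = 1, then F = {F ⊆ [n] : |F| ≤ j} for some 0 ≤ j < n. -/
open Finset

/-- The outer boundary of `F` inside `2^[n]`: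
`∂F = {G ⊆ [n] : G ∉ F, ∃ A ∈ F, |A ∆ G| = 1}`. -/
def outerBoundary (n : ℕ) (F : Finset (Finset ℕ)) : Finset (Finset ℕ) :=
  (Finset.range n).powerset.filter fun G =>
    G ∉ F ∧ ∃ A ∈ F, (symmDiff A G).card = 1

/-!
Every maximal chain `∅ = C₀ ⊂ C₁ ⊂ ⋯ ⊂ Cₙ = [n]` starts in `F` and ends outside it, so it meets
`∂F`. Exactly `n! / C(n, k)` maximal chains pass through a given `k`-set, so the average number of
sets of `∂F` on a maximal chain is `‖∂F‖ₙ = 1`; hence every maximal chain meets `∂F` exactly once.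
Consequently `F` is a down-set (a chain through `B ⊂ A` with `B ∉ F ∋ A` would leave `F` twice) and
`∂F` is an antichain. In a down-set with antichain boundary, exchanging one element of a member of
`F` for another yields a member of `F`, so membership in `F` depends only on the cardinality.
-/

variable {n : ℕ}

/-- A permutation `σ` of `Fin n` encodes the maximal chain of `2^[n]` whose `k`-th set is
`σ({0, …, k - 1})`. -/
def chainSet (σ : Equiv.Perm (Fin n)) (k : ℕ) : Finset ℕ :=
  ({i : Fin n | (i : ℕ) < k} : Finset (Fin n)).image fun i => (σ i : ℕ)

section Chains
variable (σ : Equiv.Perm (Fin n))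

lemma mem_chainSet {k x : ℕ} : x ∈ chainSet σ k ↔ ∃ i : Fin n, (i : ℕ) < k ∧ (σ i : ℕ) = x := by
  simp [chainSet]

lemma card_chainSet {k : ℕ} (hk : k ≤ n) : #(chainSet σ k) = k := by
  rw [chainSet, card_image_of_injective _ fun _ _ h => σ.injective (Fin.val_injective h),
    Fin.card_filter_val_lt, min_eq_right hk]

lemma chainSet_subset_range (k : ℕ) : chainSet σ k ⊆ range n := by
  intro x hx
  obtain ⟨i, -, rfl⟩ := (mem_chainSet σ).1 hx
  exact mem_range.2 (σ i).2

@[simp] lemma chainSet_zero : chainSet σ 0 = ∅ := by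
  simp [chainSet]

@[simp] lemma chainSet_self : chainSet σ n = range n :=
  eq_of_subset_of_card_le (chainSet_subset_range σ n) (by rw [card_chainSet σ le_rfl, card_range])

lemma chainSet_mono {k l : ℕ} (h : k ≤ l) : chainSet σ k ⊆ chainSet σ l := by
  intro x hx
  obtain ⟨i, hi, rfl⟩ := (mem_chainSet σ).1 hx
  exact (mem_chainSet σ).2 ⟨i, hi.trans_le h, rfl⟩

lemma chainSet_succ_mem_outerBoundary {F : Finset (Finset ℕ)} {k : ℕ} (hk : k < n)
    (hin : chainSet σ k ∈ F) (hout : chainSet σ (k + 1) ∉ F) :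
    chainSet σ (k + 1) ∈ outerBoundary n F := by
  refine mem_filter.2 ⟨mem_powerset.2 (chainSet_subset_range σ _), hout, _, hin, ?_⟩
  rw [symmDiff_of_le (chainSet_mono σ k.le_succ), card_sdiff_of_subset (chainSet_mono σ k.le_succ),
    card_chainSet σ hk.le, card_chainSet σ hk]
  omega

lemma exists_chainSet_mem_outerBoundary {F : Finset (Finset ℕ)} {a b : ℕ} (hab : a < b)
    (hb : b ≤ n) (ha : chainSet σ a ∈ F) (hbF : chainSet σ b ∉ F) :
    ∃ k, a < k ∧ k ≤ b ∧ chainSet σ k ∈ outerBoundary n F := by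
  induction b, hab using Nat.le_induction with
  | base => exact ⟨a + 1, a.lt_succ_self, le_rfl, chainSet_succ_mem_outerBoundary σ hb ha hbF⟩
  | succ b hab ih =>
    by_cases hbF' : chainSet σ b ∈ F
    · exact ⟨b + 1, by omega, le_rfl, chainSet_succ_mem_outerBoundary σ hb hbF' hbF⟩
    · obtain ⟨k, hak, hkb, hk⟩ := ih (by omega) hbF'
      exact ⟨k, hak, by omega, hk⟩

end Chains

def chainHits (σ : Equiv.Perm (Fin n)) (𝒢 : Finset (Finset ℕ)) : Finset (Finset ℕ) :=
  {G ∈ 𝒢 | chainSet σ #G = G}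

def chainsThrough (n : ℕ) (G : Finset ℕ) : Finset (Equiv.Perm (Fin n)) :=
  {σ | chainSet σ #G = G}

lemma exists_perm_mapsTo {G G' : Finset ℕ} (hG : ∀ x ∈ G, x < n) (hG' : ∀ x ∈ G', x < n)
    (hc : #G = #G') : ∃ τ : Equiv.Perm (Fin n), ∀ i : Fin n, (i : ℕ) ∈ G → (τ i : ℕ) ∈ G' := by
  have hcard : Fintype.card (G.attachFin hG) = Fintype.card (G'.attachFin hG') := by
    simp only [Fintype.card_coe, card_attachFin, hc]
  obtain ⟨e⟩ := Fintype.card_eq.1 hcard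
  refine ⟨e.extendSubtype, fun i hi => ?_⟩
  simpa using e.extendSubtype_mem i ((mem_attachFin hG).2 hi)

lemma card_chainsThrough_le {G G' : Finset ℕ} (hG : G ⊆ range n) (hG' : G' ⊆ range n)
    (hc : #G = #G') : #(chainsThrough n G) ≤ #(chainsThrough n G') := by
  obtain ⟨τ, hτ⟩ := exists_perm_mapsTo (fun x hx => mem_range.1 (hG hx))
    (fun x hx => mem_range.1 (hG' hx)) hc
  refine card_le_card_of_injOn (τ * ·) (fun σ hσ => ?_) (mul_right_injective τ).injOn
  simp only [chainsThrough, coe_filter, mem_univ, true_and, Set.mem_ofPred_eq] at hσ ⊢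
  have hk : #G' ≤ n := by simpa using card_le_card hG'
  refine eq_of_subset_of_card_le (fun x hx => ?_) (by rw [card_chainSet (τ * σ) hk])
  obtain ⟨i, hi, rfl⟩ := (mem_chainSet _).1 hx
  exact hτ (σ i) (hσ ▸ (mem_chainSet σ).2 ⟨i, hc ▸ hi, rfl⟩)

lemma choose_mul_card_chainsThrough {G : Finset ℕ} (hG : G ⊆ range n) :
    n.choose #G * #(chainsThrough n G) = n.factorial := by
  have hk : #G ≤ n := by simpa using card_le_card hG
  have hlevel : ∀ σ ∈ (univ : Finset (Equiv.Perm (Fin n))),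
      chainSet σ #G ∈ powersetCard #G (range n) :=
    fun σ _ => mem_powersetCard.2 ⟨chainSet_subset_range σ _, card_chainSet σ hk⟩
  have hconst : ∀ G' ∈ powersetCard #G (range n),
      #{σ : Equiv.Perm (Fin n) | chainSet σ #G = G'} = #(chainsThrough n G) := by
    intro G' hG'
    obtain ⟨hG'r, hG'c⟩ := mem_powersetCard.1 hG'
    rw [← hG'c]
    exact le_antisymm (card_chainsThrough_le hG'r hG hG'c) (card_chainsThrough_le hG hG'r hG'c.symm)
  have hperm : #(univ : Finset (Equiv.Perm (Fin n))) = n.factorial := by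
    rw [card_univ, Fintype.card_perm, Fintype.card_fin]
  rw [← hperm, card_eq_sum_card_fiberwise hlevel, sum_congr rfl hconst, sum_const,
    card_powersetCard, card_range, smul_eq_mul]

lemma sum_card_chainHits {𝒢 : Finset (Finset ℕ)} (h𝒢 : 𝒢 ⊆ (range n).powerset) :
    (∑ σ : Equiv.Perm (Fin n), #(chainHits σ 𝒢) : ℝ) = n.factorial * binNorm n 𝒢 := by
  have hswap : ∑ σ, #(chainHits σ 𝒢) = ∑ G ∈ 𝒢, #(chainsThrough n G) :=
    sum_card_bipartiteAbove_eq_sum_card_bipartiteBelow _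
  rw [← Nat.cast_sum, hswap, Nat.cast_sum, binNorm, mul_sum]
  refine sum_congr rfl fun G hG => ?_
  have hchoose := choose_mul_card_chainsThrough (mem_powerset.1 (h𝒢 hG))
  have hpos : (0 : ℝ) < n.choose #G := by
    exact_mod_cast Nat.choose_pos (by simpa using card_le_card (mem_powerset.1 (h𝒢 hG)))
  rw [← hchoose, chainsThrough]
  field_simp
  push_cast
  ring

lemma outerBoundary_subset_powerset (n : ℕ) (F : Finset (Finset ℕ)) :
    outerBoundary n F ⊆ (range n).powerset :=
  filter_subset _ _

lemma card_chainHits_outerBoundary_eq_one {F : Finset (Finset ℕ)} (hbot : ∅ ∈ F)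
    (htop : range n ∉ F) (heq : binNorm n (outerBoundary n F) = 1) (σ : Equiv.Perm (Fin n)) :
    #(chainHits σ (outerBoundary n F)) = 1 := by
  have hn : 0 < n := Nat.pos_of_ne_zero fun h => htop (by simpa [h] using hbot)
  have hone : ∀ τ : Equiv.Perm (Fin n), 1 ≤ #(chainHits τ (outerBoundary n F)) := by
    intro τ
    obtain ⟨k, -, hkn, hk⟩ := exists_chainSet_mem_outerBoundary τ hn le_rfl
      (by rwa [chainSet_zero]) (by rwa [chainSet_self])
    exact card_pos.2 ⟨_, mem_filter.2 ⟨hk, by rw [card_chainSet τ hkn]⟩⟩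
  have hsum : ∑ τ : Equiv.Perm (Fin n), 1 =
      ∑ τ : Equiv.Perm (Fin n), #(chainHits τ (outerBoundary n F)) := by
    have := sum_card_chainHits (outerBoundary_subset_powerset n F)
    rw [heq, mul_one] at this
    simp only [sum_const, card_univ, Fintype.card_perm, Fintype.card_fin, smul_eq_mul, mul_one]
    exact_mod_cast this.symm
  exact ((sum_eq_sum_iff_of_le fun τ _ => hone τ).1 hsum σ (mem_univ σ)).symm

lemma level_eq_of_card_chainHits_le_one {𝒢 : Finset (Finset ℕ)} {σ : Equiv.Perm (Fin n)}
    (h : #(chainHits σ 𝒢) ≤ 1) {k l : ℕ} (hk : k ≤ n) (hl : l ≤ n) (hk𝒢 : chainSet σ k ∈ 𝒢)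
    (hl𝒢 : chainSet σ l ∈ 𝒢) : k = l := by
  have hmem : ∀ {m}, m ≤ n → chainSet σ m ∈ 𝒢 → chainSet σ m ∈ chainHits σ 𝒢 :=
    fun hm hm𝒢 => mem_filter.2 ⟨hm𝒢, by rw [card_chainSet σ hm]⟩
  have := congrArg card (card_le_one.1 h _ (hmem hk hk𝒢) _ (hmem hl hl𝒢))
  rwa [card_chainSet σ hk, card_chainSet σ hl] at this

lemma exists_chainSet_eq_toFinset_take {l : List ℕ} (hl : l.Nodup) (hlen : l.length = n)
    (hlt : ∀ x ∈ l, x < n) : ∃ σ : Equiv.Perm (Fin n), ∀ k, chainSet σ k = (l.take k).toFinset := by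
  let f : Fin n → Fin n := fun i => ⟨l[(i : ℕ)], hlt _ (List.getElem_mem _)⟩
  have hf : Function.Injective f := fun i j hij =>
    Fin.ext ((hl.getElem_inj_iff).1 (congrArg Fin.val hij))
  refine ⟨Equiv.ofBijective f hf.bijective_of_finite, fun k => ?_⟩
  ext x
  simp only [mem_chainSet, Equiv.ofBijective_apply, List.mem_toFinset, List.mem_iff_getElem,
    List.length_take, List.getElem_take, f]
  constructor
  · rintro ⟨i, hik, rfl⟩
    exact ⟨i, by omega, rfl⟩
  · rintro ⟨j, hj, rfl⟩
    exact ⟨⟨j, by omega⟩, by rw [Fin.val_mk]; omega, rfl⟩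

lemma exists_chainSet_eq_of_subset {B A : Finset ℕ} (hBA : B ⊆ A) (hA : A ⊆ range n) :
    ∃ σ : Equiv.Perm (Fin n), chainSet σ #B = B ∧ chainSet σ #A = A := by
  have hB : B.toList.length = #B := length_toList B
  have hAB : (A \ B).toList.length = #A - #B := by
    rw [length_toList, card_sdiff_of_subset hBA]
  have hcard : #A ≤ n := by simpa using card_le_card hA
  set l := B.toList ++ (A \ B).toList ++ (range n \ A).toList
  have hnodup : l.Nodup := by
    simp only [l, List.nodup_append, nodup_toList, List.mem_append, mem_toList, mem_sdiff]
    refine ⟨⟨trivial, trivial, fun a ha b hb => ?_⟩, trivial, fun a ha b hb => ?_⟩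
    · rintro rfl; exact hb.2 ha
    · rintro rfl; exact hb.2 (ha.elim (hBA ·) And.left)
  have hlen : l.length = n := by
    simp only [l, List.length_append, hB, hAB, length_toList, card_sdiff_of_subset hA, card_range]
    have := card_le_card hBA
    omega
  have hlt : ∀ x ∈ l, x < n := by
    intro x hx
    simp only [l, List.mem_append, mem_toList, mem_sdiff] at hx
    rcases hx with (hx | hx) | hx
    exacts [mem_range.1 (hA (hBA hx)), mem_range.1 (hA hx.1), mem_range.1 hx.1]
  obtain ⟨σ, hσ⟩ := exists_chainSet_eq_toFinset_take hnodup hlen hlt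
  refine ⟨σ, ?_, ?_⟩ <;> rw [hσ] <;> simp only [l]
  · rw [List.append_assoc, List.take_left' hB, toList_toFinset]
  · rw [List.take_left' (by rw [List.length_append, hB, hAB]; have := card_le_card hBA; omega),
      List.toFinset_append, toList_toFinset, toList_toFinset, union_sdiff_of_subset hBA]

lemma isLowerSet_of_card_chainHits_le_one {F : Finset (Finset ℕ)}
    (hsub : ∀ A ∈ F, A ⊆ range n) (hbot : ∅ ∈ F) (htop : range n ∉ F)
    (hhits : ∀ σ : Equiv.Perm (Fin n), #(chainHits σ (outerBoundary n F)) ≤ 1) :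
    IsLowerSet (F : Set (Finset ℕ)) := by
  intro A B hBA hA
  by_contra hB
  have hBpos : 0 < #B := card_pos.2 (nonempty_iff_ne_empty.2 fun h => hB (h ▸ hbot))
  have hAn : #A < n := by
    refine card_range n ▸ (card_le_card (hsub A hA)).lt_of_ne fun h => htop ?_
    rwa [← eq_of_subset_of_card_le (hsub A hA) h.ge]
  have hBA' := card_le_card hBA
  obtain ⟨σ, hσB, hσA⟩ := exists_chainSet_eq_of_subset hBA (hsub A hA)
  obtain ⟨k, -, hkB, hk⟩ := exists_chainSet_mem_outerBoundary σ hBpos (by omega)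
    (by rwa [chainSet_zero]) (by rwa [hσB])
  obtain ⟨l, hAl, hln, hl⟩ := exists_chainSet_mem_outerBoundary σ hAn le_rfl
    (by rwa [hσA]) (by rwa [chainSet_self])
  have := level_eq_of_card_chainHits_le_one (hhits σ) (by omega) hln hk hl
  omega

lemma isAntichain_of_card_chainHits_le_one {𝒢 : Finset (Finset ℕ)}
    (h𝒢 : 𝒢 ⊆ (range n).powerset) (hhits : ∀ σ : Equiv.Perm (Fin n), #(chainHits σ 𝒢) ≤ 1) :
    IsAntichain (· ⊆ ·) (𝒢 : Set (Finset ℕ)) := by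
  intro G hG G' hG' hne hGG'
  have hG'n := mem_powerset.1 (h𝒢 hG')
  obtain ⟨σ, hσG, hσG'⟩ := exists_chainSet_eq_of_subset hGG' hG'n
  have hcard : #G' ≤ n := by simpa using card_le_card hG'n
  refine hne (eq_of_subset_of_card_le hGG' (level_eq_of_card_chainHits_le_one (hhits σ)
    (hcard.trans' (card_le_card hGG')) hcard (by rwa [hσG]) (by rwa [hσG'])).ge)

lemma insert_mem_outerBoundary {F : Finset (Finset ℕ)} {A : Finset ℕ} {y : ℕ} (hA : A ∈ F)
    (hy : y ∉ A) (hyA : insert y A ∉ F) (hyAn : insert y A ⊆ range n) :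
    insert y A ∈ outerBoundary n F := by
  refine mem_filter.2 ⟨mem_powerset.2 hyAn, hyA, A, hA, ?_⟩
  rw [symmDiff_of_le (subset_insert y A), card_sdiff_of_subset (subset_insert y A),
    card_insert_of_notMem hy, Nat.add_sub_cancel_left]

section LowerSet

variable {F : Finset (Finset ℕ)} (hlow : IsLowerSet (F : Set (Finset ℕ)))
  (hanti : IsAntichain (· ⊆ ·) (outerBoundary n F : Set (Finset ℕ)))
include hlow hanti

lemma insert_erase_mem {A : Finset ℕ} (hA : A ∈ F) (hAn : A ⊆ range n) {x y : ℕ} (hx : x ∈ A)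
    (hy : y ∉ A) (hyn : y < n) : insert y (A.erase x) ∈ F := by
  by_contra hBF
  have hxy : x ≠ y := ne_of_mem_of_not_mem hx hy
  have hBA : insert y (A.erase x) ⊆ insert y A := insert_subset_insert y (erase_subset x A)
  have hyAn : insert y A ⊆ range n := insert_subset (mem_range.2 hyn) hAn
  have hB : insert y (A.erase x) ∈ outerBoundary n F :=
    insert_mem_outerBoundary (hlow (erase_subset x A) hA) (fun h => hy (mem_of_mem_erase h)) hBF
      (hBA.trans hyAn)
  have hyA : insert y A ∈ outerBoundary n F :=
    insert_mem_outerBoundary hA hy (fun h => hBF (hlow hBA h)) hyAn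
  refine hanti hB hyA (fun h => ?_) hBA
  have hxB : x ∈ insert y (A.erase x) := h ▸ mem_insert_of_mem hx
  simp [hxy] at hxB

lemma mem_of_card_eq {A B : Finset ℕ} (hA : A ∈ F) (hAn : A ⊆ range n) (hBn : B ⊆ range n)
    (hc : #A = #B) : B ∈ F := by
  induction hd : #(A \ B) generalizing A with
  | zero =>
    rwa [← eq_of_subset_of_card_le (sdiff_eq_empty_iff_subset.1 (card_eq_zero.1 hd)) hc.ge]
  | succ d ih =>
    obtain ⟨x, hx⟩ : (A \ B).Nonempty := card_pos.1 (by omega)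
    obtain ⟨y, hy⟩ : (B \ A).Nonempty := by
      rw [nonempty_iff_ne_empty, Ne, sdiff_eq_empty_iff_subset]
      intro hBA
      exact (mem_sdiff.1 hx).2 (by rw [eq_of_subset_of_card_le hBA hc.le]; exact (mem_sdiff.1 hx).1)
    rw [mem_sdiff] at hx hy
    have hy' : y ∉ A.erase x := fun h => hy.2 (mem_of_mem_erase h)
    have hxB : insert y (A.erase x) \ B = (A \ B).erase x := by
      ext z
      simp only [mem_sdiff, mem_insert, mem_erase]
      constructor
      · rintro ⟨rfl | h, hz⟩
        exacts [absurd hy.1 hz, ⟨h.1, h.2, hz⟩]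
      · rintro ⟨h, hA, hz⟩
        exact ⟨Or.inr ⟨h, hA⟩, hz⟩
    refine ih (insert_erase_mem hlow hanti hA hAn hx.1 hy.2 (mem_range.1 (hBn hy.1)))
      (insert_subset (hBn hy.1) ((erase_subset x A).trans hAn)) ?_ ?_
    · rw [card_insert_of_notMem hy', card_erase_of_mem hx.1, ← hc]
      have := card_pos.2 ⟨x, hx.1⟩
      omega
    · rw [hxB, card_erase_of_mem (mem_sdiff.2 hx), hd, Nat.add_sub_cancel]

lemma exists_eq_filter_card_le (hsub : ∀ A ∈ F, A ⊆ range n) (hbot : ∅ ∈ F) (htop : range n ∉ F) :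
    ∃ j, j < n ∧ F = (range n).powerset.filter fun A => #A ≤ j := by
  obtain ⟨B, hB, hBmin⟩ := exists_min_image ((range n).powerset.filter (· ∉ F)) card
    ⟨range n, mem_filter.2 ⟨mem_powerset_self _, htop⟩⟩
  rw [mem_filter, mem_powerset] at hB
  have hBpos : 0 < #B := card_pos.2 (nonempty_iff_ne_empty.2 fun h => hB.2 (h ▸ hbot))
  have hBn : #B ≤ n := by simpa using card_le_card hB.1
  refine ⟨#B - 1, by omega, ext fun A => ?_⟩
  rw [mem_filter, mem_powerset]
  constructor
  · intro hA
    refine ⟨hsub A hA, Nat.le_sub_one_of_lt (not_le.1 fun hBA => ?_)⟩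
    obtain ⟨A', hA'A, hA'c⟩ := exists_subset_card_eq hBA
    exact hB.2 (mem_of_card_eq hlow hanti (hlow hA'A hA) (hA'A.trans (hsub A hA)) hB.1 hA'c)
  · rintro ⟨hAn, hAc⟩
    by_contra hA
    have := hBmin A (mem_filter.2 ⟨mem_powerset.2 hAn, hA⟩)
    omega

end LowerSet

theorem stmt_11 (n : ℕ) (F : Finset (Finset ℕ))
    (hsub : ∀ A ∈ F, A ⊆ Finset.range n)
    (hbot : ∅ ∈ F) (htop : Finset.range n ∉ F)
    (heq : binNorm n (outerBoundary n F) = 1) :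
    ∃ j, j < n ∧
      F = (Finset.range n).powerset.filter fun A => A.card ≤ j := by
  have hhits (σ : Equiv.Perm (Fin n)) : #(chainHits σ (outerBoundary n F)) ≤ 1 :=
    (card_chainHits_outerBoundary_eq_one hbot htop heq σ).le
  exact exists_eq_filter_card_le (isLowerSet_of_card_chainHits_le_one hsub hbot htop hhits)
    (isAntichain_of_card_chainHits_le_one (outerBoundary_subset_powerset n F) hhits) hsub hbot htop
end

section
/- Let n and ℓ be integers with n ≥ 3ℓ and n > ℓ ≥ 0. Then for every down-set F ⊆ 2^[n] with ‖F‖_n < (n + 1)/2, one has |F| ≥ Σ_{0 ≤ i < ℓ} C(n,i) + (‖F‖_n − ℓ)·C(n,ℓ). -/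
open Finset

/-!
Write `x i = |F # i| / C(n, i)` for the density of the `i`-th level of `F`. Then
`|F| = ∑ x i C(n, i)` and `‖F‖ = ∑ x i`, so the claim is
`∑_{i < ℓ} (C(n, i) - C(n, ℓ)) ≤ ∑_i x i (C(n, i) - C(n, ℓ))`.
For a down-set the densities are at most `1` and non-increasing (local LYM), and `‖F‖ < (n + 1) / 2`
forces `x i = 0` for `i ≥ n - 1`: a set of size `n - 1` would bring along its power set, whose norm
is exactly `(n + 1) / 2`. Below `ℓ` the inequality then holds termwise. From `ℓ` to `n - 2` each term
is at least `x (n - ℓ) (C(n, i) - C(n, ℓ))`, and these sum to something nonnegative because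
`∑_{ℓ ≤ i ≤ n - 2} C(n, i) ≥ (n - 1 - ℓ) C(n, ℓ)` when `n ≥ 3ℓ`.
-/

theorem Nat.choose_le_choose_of_le_of_le_sub {n k i : ℕ} (hki : k ≤ i) (hik : i ≤ n - k) :
    n.choose k ≤ n.choose i := by
  wlog hi : 2 * i ≤ n generalizing i
  · rw [← Nat.choose_symm (by omega : i ≤ n)]
    exact this (by omega) (by omega) (by omega)
  induction i, hki using Nat.le_induction with
  | base => rfl
  | succ m hkm ih =>
    exact (ih (by omega) (by omega)).trans (Nat.choose_le_succ_of_lt_half_left (by omega))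

-- With `ℓ = a + 3` and `n = 3ℓ + d`, expressing `C(n, ℓ + 1)` and `C(n, ℓ + 2)` through `C(n, ℓ)`
-- turns this into `C(n, ℓ)` times a polynomial in `a, d` with nonnegative value.
theorem Nat.sub_one_sub_mul_choose_le_of_three_le {n ℓ : ℕ} (hℓ : 3 ≤ ℓ) (hn : 3 * ℓ ≤ n) :
    (n - 1 - ℓ) * n.choose ℓ ≤
      2 * n.choose ℓ + 2 * n.choose (ℓ + 1) + (n - 2 * ℓ - 3) * n.choose (ℓ + 2) := by
  obtain ⟨a, rfl⟩ : ∃ a, ℓ = a + 3 := ⟨ℓ - 3, by omega⟩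
  obtain ⟨d, rfl⟩ : ∃ d, n = 3 * (a + 3) + d := ⟨n - 3 * (a + 3), by omega⟩
  have h₁ := Nat.choose_succ_right_eq (3 * (a + 3) + d) (a + 3)
  have h₂ := Nat.choose_succ_right_eq (3 * (a + 3) + d) (a + 3 + 1)
  rw [show 3 * (a + 3) + d - (a + 3) = 2 * a + d + 6 by omega] at h₁
  rw [show 3 * (a + 3) + d - (a + 3 + 1) = 2 * a + d + 5 by omega] at h₂
  rw [show 3 * (a + 3) + d - 1 - (a + 3) = 2 * a + d + 5 by omega,
    show 3 * (a + 3) + d - 2 * (a + 3) - 3 = a + d by omega]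
  set c₀ := (3 * (a + 3) + d).choose (a + 3)
  set c₁ := (3 * (a + 3) + d).choose (a + 3 + 1)
  set c₂ := (3 * (a + 3) + d).choose (a + 3 + 2)
  -- the polynomial is negative for some real `0 < a < 1`: here `a` must be an integer
  have hpoly : 0 ≤ c₀ * (5 * (a * a - a) + 26 * a * d + 5 * a * d ^ 2 + 7 * a ^ 2 * d + 2 * a ^ 3 +
      20 * d + 11 * d ^ 2 + d ^ 3 : ℤ) := by
    have : (a : ℤ) ≤ a * a := by exact_mod_cast Nat.le_mul_self a
    have : (0 : ℤ) ≤ a * a - a := by linarith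
    positivity
  refine Nat.le_of_mul_le_mul_right (?_ : _ ≤ _) (show 0 < (a + 4) * (a + 5) by positivity)
  zify at h₁ h₂ ⊢
  linear_combination hpoly - (2 * (a + 5) + (a + d) * (2 * a + d + 5) : ℤ) * h₁ -
    ((a + d) * (a + 4) : ℤ) * h₂

theorem Nat.sub_one_sub_mul_choose_le_sum_Ico_choose {n ℓ : ℕ} (hn : 3 * ℓ ≤ n) :
    (n - 1 - ℓ) * n.choose ℓ ≤ ∑ i ∈ Ico ℓ (n - 1), n.choose i := by
  rcases le_or_gt ℓ 2 with hℓ | hℓ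
  · simpa using card_nsmul_le_sum (Ico ℓ (n - 1)) _ _ fun i hi =>
      choose_le_choose_of_le_of_le_sub (mem_Ico.1 hi).1 (by have := (mem_Ico.1 hi).2; omega)
  -- For `ℓ ≥ 3` the terms above `n - ℓ` fall below `C(n, ℓ)`. Drop them, keep the four terms at
  -- `ℓ, ℓ + 1, n - ℓ - 1, n - ℓ`, and bound the ones strictly between by `C(n, ℓ + 2)`.
  have hmid : (n - 2 * ℓ - 3) * n.choose (ℓ + 2) ≤ ∑ i ∈ Ico (ℓ + 2) (n - ℓ - 1), n.choose i := by
    simpa [show n - ℓ - 1 - (ℓ + 2) = n - 2 * ℓ - 3 by omega] using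
      card_nsmul_le_sum (Ico (ℓ + 2) (n - ℓ - 1)) _ _ fun i hi =>
        choose_le_choose_of_le_of_le_sub (mem_Ico.1 hi).1 (by have := (mem_Ico.1 hi).2; omega)
  have hsplit : ∑ i ∈ Ico ℓ (n - ℓ + 1), n.choose i =
      (n.choose ℓ + n.choose (ℓ + 1)) + ∑ i ∈ Ico (ℓ + 2) (n - ℓ - 1), n.choose i +
        (n.choose (ℓ + 1) + n.choose ℓ) := by
    rw [← sum_Ico_consecutive _ (by omega : ℓ ≤ n - ℓ - 1) (by omega : n - ℓ - 1 ≤ n - ℓ + 1),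
      ← sum_Ico_consecutive _ (by omega : ℓ ≤ ℓ + 2) (by omega : ℓ + 2 ≤ n - ℓ - 1)]
    rw [show n - ℓ + 1 = n - ℓ - 1 + 1 + 1 by omega, sum_Ico_succ_top (by omega),
      sum_Ico_succ_top le_rfl, sum_Ico_succ_top (by omega), sum_Ico_succ_top le_rfl]
    rw [show n - ℓ - 1 = n - (ℓ + 1) by omega, show n - (ℓ + 1) + 1 = n - ℓ by omega,
      choose_symm (by omega), choose_symm (by omega)]
    simp
  calc (n - 1 - ℓ) * n.choose ℓ
      ≤ 2 * n.choose ℓ + 2 * n.choose (ℓ + 1) + (n - 2 * ℓ - 3) * n.choose (ℓ + 2) :=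
        sub_one_sub_mul_choose_le_of_three_le hℓ hn
    _ ≤ ∑ i ∈ Ico ℓ (n - ℓ + 1), n.choose i := by rw [hsplit]; omega
    _ ≤ ∑ i ∈ Ico ℓ (n - 1), n.choose i := sum_le_sum_of_subset (Ico_subset_Ico_right (by omega))

section WeightedBinomialSums

variable {n ℓ : ℕ} {x : ℕ → ℝ}

theorem sum_Ico_choose_sub_nonneg (hn : 3 * ℓ ≤ n) :
    0 ≤ ∑ i ∈ Ico ℓ (n - 1), ((n.choose i : ℝ) - n.choose ℓ) := by
  rw [sum_sub_distrib, sum_const, Nat.card_Ico, nsmul_eq_mul, sub_nonneg]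
  exact_mod_cast Nat.sub_one_sub_mul_choose_le_sum_Ico_choose hn

-- Both factors change sign at `i = n - ℓ`.
theorem sum_Ico_mul_choose_sub_nonneg (hn : 3 * ℓ ≤ n) (hx : Antitone x)
    (htop : ∀ i, n - 1 ≤ i → x i = 0) :
    0 ≤ ∑ i ∈ Ico ℓ (n + 1), x i * ((n.choose i : ℝ) - n.choose ℓ) := by
  rw [← sum_subset (Ico_subset_Ico_right (by omega : n - 1 ≤ n + 1)) fun i hi hi' => by
    rw [htop i (by simp only [mem_Ico, not_and, not_lt] at hi hi'; omega), zero_mul]]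
  have hterm : ∀ i ∈ Ico ℓ (n - 1), x (n - ℓ) * ((n.choose i : ℝ) - n.choose ℓ) ≤
      x i * ((n.choose i : ℝ) - n.choose ℓ) := by
    intro i hi
    obtain ⟨hℓi, hin⟩ := mem_Ico.1 hi
    rcases le_or_gt i (n - ℓ) with hmid | htail
    · exact mul_le_mul_of_nonneg_right (hx hmid)
        (sub_nonneg.2 (by exact_mod_cast Nat.choose_le_choose_of_le_of_le_sub hℓi hmid))
    · refine mul_le_mul_of_nonpos_right (hx htail.le) (sub_nonpos.2 ?_)
      rw [← Nat.choose_symm (by omega : i ≤ n)]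
      exact_mod_cast Nat.choose_le_choose_of_le_of_le_sub (by omega) (by omega)
  calc 0 ≤ x (n - ℓ) * ∑ i ∈ Ico ℓ (n - 1), ((n.choose i : ℝ) - n.choose ℓ) :=
        mul_nonneg ((htop n (by omega)).symm.le.trans (hx (by omega))) (sum_Ico_choose_sub_nonneg hn)
    _ ≤ _ := by rw [mul_sum]; exact sum_le_sum hterm

theorem sum_range_choose_sub_le_sum_mul_choose_sub (hn : 3 * ℓ ≤ n) (hx₁ : ∀ i, x i ≤ 1)
    (hx : Antitone x) (htop : ∀ i, n - 1 ≤ i → x i = 0) :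
    ∑ i ∈ range ℓ, ((n.choose i : ℝ) - n.choose ℓ) ≤
      ∑ i ∈ range (n + 1), x i * ((n.choose i : ℝ) - n.choose ℓ) := by
  rw [← sum_range_add_sum_Ico _ (by omega : ℓ ≤ n + 1)]
  refine le_add_of_le_of_nonneg (sum_le_sum fun i hi => ?_) (sum_Ico_mul_choose_sub_nonneg hn hx htop)
  have hi := mem_range.1 hi
  have hle : (n.choose i : ℝ) ≤ n.choose ℓ := by
    exact_mod_cast Nat.choose_le_choose_of_le_of_le_sub hi.le (by omega)
  simpa using mul_le_mul_of_nonpos_right (hx₁ i) (sub_nonpos.2 hle)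

end WeightedBinomialSums

-- For `i > n` the density is `0 / 0 = 0`, which makes it antitone on all of `ℕ`.
noncomputable def levelDensity (n : ℕ) (F : Finset (Finset ℕ)) (i : ℕ) : ℝ :=
  #(F # i) / n.choose i

section Families

variable {n : ℕ} {F : Finset (Finset ℕ)}

theorem card_slice_le_choose (hsub : ∀ A ∈ F, A ⊆ range n) (i : ℕ) :
    #(F # i) ≤ n.choose i := by
  calc #(F # i) ≤ #((range n).powersetCard i) := card_le_card fun A hA =>
        mem_powersetCard.2 ⟨hsub A (mem_slice.1 hA).1, (mem_slice.1 hA).2⟩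
    _ = n.choose i := by rw [card_powersetCard, card_range]

theorem card_slice_succ_mul_le (hsub : ∀ A ∈ F, A ⊆ range n)
    (hdown : ∀ A ∈ F, ∀ B ⊆ A, B ∈ F) (i : ℕ) :
    #(F # (i + 1)) * (i + 1) ≤ #(F # i) * (n - i) := by
  classical
  refine card_mul_le_card_mul (fun A B => B ⊆ A) (fun A hA => ?_) (fun B hB => ?_)
  · obtain ⟨hAF, hAcard⟩ := mem_slice.1 hA
    calc i + 1 = #(A.powersetCard i) := by rw [card_powersetCard, hAcard, Nat.choose_succ_self_right]
      _ ≤ _ := card_le_card fun B hB => by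
        obtain ⟨hBA, hBcard⟩ := mem_powersetCard.1 hB
        exact mem_filter.2 ⟨mem_slice.2 ⟨hdown A hAF B hBA, hBcard⟩, hBA⟩
  · obtain ⟨hBF, hBcard⟩ := mem_slice.1 hB
    calc _ ≤ #((range n \ B).image (insert · B)) := card_le_card fun A hA => by
          obtain ⟨hA, hBA⟩ := mem_filter.1 hA
          obtain ⟨hAF, hAcard⟩ := mem_slice.1 hA
          obtain ⟨a, haA, haB⟩ := not_subset.1 fun hAB : A ⊆ B => by
            have := card_le_card hAB; omega
          refine mem_image.2 ⟨a, mem_sdiff.2 ⟨hsub A hAF haA, haB⟩, ?_⟩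
          exact eq_of_subset_of_card_le (insert_subset haA hBA) (by
            rw [card_insert_of_notMem haB]; omega)
      _ ≤ #(range n \ B) := card_image_le
      _ = n - i := by rw [card_sdiff_of_subset (hsub B hBF), card_range, hBcard]

theorem levelDensity_nonneg (i : ℕ) : 0 ≤ levelDensity n F i := by
  unfold levelDensity; positivity

theorem levelDensity_le_one (hsub : ∀ A ∈ F, A ⊆ range n) (i : ℕ) : levelDensity n F i ≤ 1 :=
  div_le_one_of_le₀ (by exact_mod_cast card_slice_le_choose hsub i) (by positivity)

theorem levelDensity_antitone (hsub : ∀ A ∈ F, A ⊆ range n)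
    (hdown : ∀ A ∈ F, ∀ B ⊆ A, B ∈ F) : Antitone (levelDensity n F) := by
  refine antitone_nat_of_succ_le fun i => ?_
  rcases lt_or_ge i n with hi | hi
  · have hpos : 0 < n.choose i := Nat.choose_pos hi.le
    have hcross : #(F # (i + 1)) * n.choose i ≤ #(F # i) * n.choose (i + 1) := by
      refine Nat.le_of_mul_le_mul_right ?_ (Nat.succ_pos i)
      calc #(F # (i + 1)) * n.choose i * (i + 1)
          = #(F # (i + 1)) * (i + 1) * n.choose i := by ring
        _ ≤ #(F # i) * (n - i) * n.choose i :=
          Nat.mul_le_mul_right _ (card_slice_succ_mul_le hsub hdown i)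
        _ = #(F # i) * n.choose (i + 1) * (i + 1) := by
          rw [mul_assoc, mul_assoc, mul_comm (n - i), ← Nat.choose_succ_right_eq]
    rw [levelDensity, levelDensity, div_le_div_iff₀ (by exact_mod_cast Nat.choose_pos hi)
      (by exact_mod_cast hpos)]
    exact_mod_cast hcross
  · rw [levelDensity, Nat.choose_eq_zero_of_lt (by omega), Nat.cast_zero, div_zero]
    exact levelDensity_nonneg i

theorem card_eq_sum_levelDensity_mul_choose (hcard : ∀ A ∈ F, #A ≤ n) :
    (#F : ℝ) = ∑ i ∈ range (n + 1), levelDensity n F i * n.choose i := by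
  rw [card_eq_sum_card_fiberwise fun A hA => mem_range.2 (Nat.lt_succ_of_le (hcard A hA)),
    Nat.cast_sum]
  refine sum_congr rfl fun i hi => ?_
  have : (n.choose i : ℝ) ≠ 0 := by
    exact_mod_cast (Nat.choose_pos (Nat.lt_succ_iff.1 (mem_range.1 hi))).ne'
  rw [levelDensity, div_mul_cancel₀ _ this]
  rfl

theorem binNorm_eq_sum_levelDensity (hcard : ∀ A ∈ F, #A ≤ n) :
    binNorm n F = ∑ i ∈ range (n + 1), levelDensity n F i := by
  rw [binNorm, ← sum_fiberwise_of_maps_to fun A hA => mem_range.2 (Nat.lt_succ_of_le (hcard A hA))]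
  refine sum_congr rfl fun i _ => ?_
  rw [sum_congr rfl fun A hA => by rw [(mem_filter.1 hA).2], sum_const, nsmul_eq_mul, levelDensity,
    mul_one_div]
  rfl

theorem binNorm_powerset_s15 (A : Finset ℕ) : binNorm (#A + 1) A.powerset = (#A + 2) / 2 := by
  set m := #A
  have hslice : ∀ i, #(A.powerset # i) = m.choose i := fun i => by
    rw [← card_powersetCard, powersetCard_eq_filter]; rfl
  have hterm : ∀ i ∈ range (m + 2),
      levelDensity (m + 1) A.powerset i = ((m + 1 - i : ℕ) : ℝ) / (m + 1) := by
    intro i hi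
    have hpos : (0 : ℝ) < (m + 1).choose i := by
      exact_mod_cast Nat.choose_pos (Nat.lt_succ_iff.1 (mem_range.1 hi))
    rw [levelDensity, hslice, div_eq_div_iff hpos.ne' (by positivity)]
    exact_mod_cast (Nat.choose_mul_succ_eq m i).trans (mul_comm _ _)
  have hgauss : (∑ i ∈ range (m + 2), (m + 1 - i)) * 2 = (m + 2) * (m + 1) := by
    calc (∑ i ∈ range (m + 2), (m + 1 - i)) * 2 = (∑ i ∈ range (m + 2), i) * 2 := by
          rw [← sum_range_reflect]
          exact congrArg (· * 2) (sum_congr rfl fun i hi => by have := mem_range.1 hi; omega)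
      _ = (m + 2) * (m + 1) := sum_range_id_mul_two _
  rw [binNorm_eq_sum_levelDensity fun B hB => (card_le_card (mem_powerset.1 hB)).trans m.le_succ,
    sum_congr rfl hterm, ← sum_div, ← Nat.cast_sum]
  have : ((∑ i ∈ range (m + 2), (m + 1 - i) : ℕ) : ℝ) * 2 = (m + 2) * (m + 1) := by
    exact_mod_cast hgauss
  field_simp
  linarith

theorem card_add_two_le_of_binNorm_lt (hdown : ∀ A ∈ F, ∀ B ⊆ A, B ∈ F) (hnorm : binNorm n F < (n + 1) / 2) :
    ∀ A ∈ F, #A + 2 ≤ n := by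
  intro A hA
  by_contra! hlarge
  obtain ⟨B, hBA, hB⟩ := exists_subset_card_eq (s := A) (n := n - 1) (by omega)
  have hmono : binNorm n B.powerset ≤ binNorm n F :=
    sum_le_sum_of_subset_of_nonneg (fun C hC => hdown B (hdown A hA B hBA) C (mem_powerset.1 hC))
      fun _ _ _ => by positivity
  rcases n with _ | m
  · have hpow : binNorm 0 {∅} = 1 := by simp [binNorm]
    rw [card_eq_zero.1 hB, powerset_empty] at hmono
    push_cast at hnorm
    linarith
  · have hpow := binNorm_powerset_s15 B
    rw [hB, Nat.add_sub_cancel] at hpow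
    push_cast at hnorm
    linarith

theorem levelDensity_eq_zero_of_sub_one_le (hdown : ∀ A ∈ F, ∀ B ⊆ A, B ∈ F) (hnorm : binNorm n F < (n + 1) / 2) {i : ℕ}
    (hi : n - 1 ≤ i) : levelDensity n F i = 0 := by
  have : F # i = ∅ := eq_empty_of_forall_notMem fun A hA => by
    have := card_add_two_le_of_binNorm_lt hdown hnorm A (mem_slice.1 hA).1
    have := (mem_slice.1 hA).2
    omega
  simp [levelDensity, this]

end Families

theorem stmt_15_general (n ℓ : ℕ) (h3ℓ : 3 * ℓ ≤ n)
    (F : Finset (Finset ℕ))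
    (hsub : ∀ A ∈ F, A ⊆ Finset.range n)
    (hdown : ∀ A ∈ F, ∀ B ⊆ A, B ∈ F)
    (hnorm : binNorm n F < ((n : ℝ) + 1) / 2) :
    (F.card : ℝ) ≥ (∑ i ∈ Finset.range ℓ, (n.choose i : ℝ)) +
      (binNorm n F - (ℓ : ℝ)) * (n.choose ℓ : ℝ) := by
  have hcard : ∀ A ∈ F, #A ≤ n := fun A hA => by simpa using card_le_card (hsub A hA)
  have key := sum_range_choose_sub_le_sum_mul_choose_sub h3ℓ (levelDensity_le_one hsub)
    (levelDensity_antitone hsub hdown) fun _ => levelDensity_eq_zero_of_sub_one_le hdown hnorm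
  rw [binNorm_eq_sum_levelDensity hcard, card_eq_sum_levelDensity_mul_choose hcard]
  simp only [mul_sub, sum_sub_distrib, ← sum_mul, sum_const, card_range, nsmul_eq_mul] at key
  linarith

theorem stmt_15 (n ℓ : ℕ) (h3ℓ : 3 * ℓ ≤ n) (hℓn : ℓ < n)
    (F : Finset (Finset ℕ))
    (hsub : ∀ A ∈ F, A ⊆ Finset.range n)
    (hdown : ∀ A ∈ F, ∀ B ⊆ A, B ∈ F)
    (hnorm : binNorm n F < ((n : ℝ) + 1) / 2) :
    (F.card : ℝ) ≥ (∑ i ∈ Finset.range ℓ, (n.choose i : ℝ)) +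
      (binNorm n F - (ℓ : ℝ)) * (n.choose ℓ : ℝ) :=
  stmt_15_general n ℓ h3ℓ F hsub hdown hnorm
end
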